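/- Let (ψ₁,c₁) and (ψ₂,c₂) be solutions of the differential system (D) with c₁ ≥ c₂, set θ := ψ₁ − ψ₂, and let s₀ ∈ ℝ satisfy θ(s₀) = 0. Let b := inf{s > s₀ : θ'(s) = 0}, with the convention b = +∞ if this set is empty. If b > s₀, then θ'(s) < 0 for every s ∈ (s₀, b). -/

import Mathlib

/-!
Suppose `θ' ≥ 0` at some `s ∈ (s₀, b)`. As `θ'` has no zero on `(s₀, b)`, it is positive there,
so `θ > 0` on `(s₀, b]`.

For a single solution, the equation `f(ψ') ψ'' H'(sψ' - ψ) = c N` with `f, H', N > 0` lets `ψ'`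
cross a level in `[0, 1]` only upwards; together with `ψ' → 0, 1` this forces `c > 0`, `f(ψ') > 0`,
`ψ'' > 0`, and `ψ'` is an increasing bijection `ℝ → (0, 1)`.

If `b < ∞`, then `θ'(b) = 0` and `θ(b) > 0`, so the two equations at `b` share `f(ψ')` while `H'` is
evaluated at a smaller point for `ψ₁`. With `c₁ ≥ c₂` this gives `ψ₁''(b) > ψ₂''(b)`, i.e.
`θ''(b) > 0`, which is impossible for a function `θ'` that is positive on the left of `b` and
vanishes at `b`.

If `b = ∞`, substitute `q = ψ'(x)`: `c ∫ₐᵇ N = ∫ f(q) H'(ψ*(q)) dq` over `q ∈ [ψ'(a), ψ'(b)]`, with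
`ψ*` the Legendre transform. Since `ψ₁ > ψ₂` on `[t, ∞)` and `ψ₂` lies above its tangents,
`x ψ₁'(x) - ψ₁(x) ≤ ψ₂*(ψ₁'(x))` for `x ≥ t`, whence `c₁ ∫_t^∞ N ≤ c₂ ∫_{t₂}^∞ N` where
`ψ₂'(t₂) = ψ₁'(t)`. But `θ'(t) > 0` gives `t₂ > t`, which contradicts `c₁ ≥ c₂ > 0`.
-/

open MeasureTheory Filter Set Topology Function ProbabilityTheory

lemma apply_le_of_deriv_neg_at_level {v : ℝ → ℝ} (hv : Differentiable ℝ v) {a b y : ℝ}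
    (hab : a ≤ b) (ha : v a ≤ y) (hlevel : ∀ x ∈ Ico a b, v x = y → deriv v x < 0) :
    v b ≤ y :=
  image_le_of_deriv_right_lt_deriv_boundary' (B := fun _ => y) (B' := fun _ => 0)
    hv.continuous.continuousOn (fun x _ => (hv x).hasDerivAt.hasDerivWithinAt) ha
    continuousOn_const (fun _ _ => hasDerivWithinAt_const _ _ _) hlevel ⟨hab, le_rfl⟩

lemma le_apply_of_deriv_neg_at_level {v : ℝ → ℝ} (hv : Differentiable ℝ v) {a b y : ℝ}
    (hab : a ≤ b) (hb : y ≤ v b) (hlevel : ∀ x ∈ Ioc a b, v x = y → deriv v x < 0) :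
    y ≤ v a := by
  have hu : ∀ x, HasDerivAt (fun x => -v (-x)) (-(deriv v (-x) * -1)) x := fun x =>
    ((hv (-x)).hasDerivAt.comp x (hasDerivAt_neg x)).neg
  have key := apply_le_of_deriv_neg_at_level (fun x => (hu x).differentiableAt) (neg_le_neg hab)
    (y := -y) (by simpa using hb) fun x hx hux => by
      rw [(hu x).deriv, mul_neg_one, neg_neg]
      exact hlevel (-x) ⟨by linarith [hx.2], by linarith [hx.1]⟩ (by linarith)
  simpa using key

lemma apply_lt_of_deriv_nonpos_on_window {v : ℝ → ℝ} (hv : Differentiable ℝ v) {a b y₁ y₂ : ℝ}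
    (hab : a ≤ b) (ha : v a ≤ y₁) (hy : y₁ < y₂)
    (hwin : ∀ x ∈ Ico a b, v x ∈ Icc y₁ y₂ → deriv v x ≤ 0) : v b < y₂ := by
  -- tilt the level `y₁` upwards, slowly enough to stay below `y₂` on `[a, b]`
  set δ := (y₂ - y₁) / (b - a + 1)
  have hδ : 0 < δ := div_pos (by linarith) (by linarith)
  have hδb : δ * (b - a) < y₂ - y₁ := by
    have : δ * (b - a + 1) = y₂ - y₁ := div_mul_cancel₀ _ (by linarith)
    linarith
  have hw : ∀ x, HasDerivAt (fun x => v x - δ * (x - a)) (deriv v x - δ * 1) x := fun x =>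
    (hv x).hasDerivAt.sub (((hasDerivAt_id' x).sub_const a).const_mul δ)
  have key := apply_le_of_deriv_neg_at_level (fun x => (hw x).differentiableAt) hab (y := y₁)
    (by simpa using ha) fun x hx hvx => by
      have hx' : v x ∈ Icc y₁ y₂ := ⟨by nlinarith [hx.1], by nlinarith [hx.1, hx.2]⟩
      rw [(hw x).deriv, mul_one]
      linarith [hwin x hx hx']
  linarith

lemma pos_of_nonneg_of_lt_sInf_zero {g : ℝ → ℝ} (hg : Continuous g) {a s x : ℝ} {b : EReal}
    (hb : b = sInf (Real.toEReal '' {x | a < x ∧ g x = 0})) (hs : a < s) (hsb : (s : EReal) < b)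
    (hgs : 0 ≤ g s) (hx : a < x) (hxb : (x : EReal) < b) : 0 < g x := by
  have hI : IsPreconnected {y : ℝ | a < y ∧ (y : EReal) < b} :=
    OrdConnected.isPreconnected ⟨fun y hy z hz w hw =>
      ⟨hy.1.trans_le hw.1, (EReal.coe_le_coe_iff.2 hw.2).trans_lt hz.2⟩⟩
  by_contra! hgx
  obtain ⟨y, ⟨hy, hyb⟩, hy0⟩ := hI.intermediate_value ⟨hx, hxb⟩ ⟨hs, hsb⟩ hg.continuousOn ⟨hgx, hgs⟩
  exact (hb ▸ sInf_le ⟨y, ⟨hy, hy0⟩, rfl⟩ : b ≤ y).not_gt hyb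

lemma apply_eq_zero_of_coe_eq_sInf {g : ℝ → ℝ} (hg : Continuous g) {a β : ℝ}
    (h : (β : EReal) = sInf (Real.toEReal '' {x | a < x ∧ g x = 0})) : g β = 0 := by
  set Z := {x | a < x ∧ g x = 0}
  have hZ : Z.Nonempty := nonempty_iff_ne_empty.2 fun hZ => by simp [hZ] at h
  have hbdd : BddBelow Z := ⟨a, fun x hx => hx.1.le⟩
  have hβ : β = sInf Z := EReal.coe_injective <| h.trans <|
    (Monotone.map_csInf_of_continuousAt continuous_coe_real_ereal.continuousAt
      (fun _ _ => EReal.coe_le_coe_iff.2) hZ hbdd).symm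
  have hcl : closure Z ⊆ g ⁻¹' {0} :=
    closure_minimal (fun x hx => hx.2) (isClosed_singleton.preimage hg)
  exact hcl (hβ ▸ csInf_mem_closure hZ hbdd)

lemma pos_of_deriv_pos {g : ℝ → ℝ} (hg : Continuous g) {a b : ℝ} (hab : a < b) (ha : g a = 0)
    (hpos : ∀ x ∈ Ioo a b, 0 < deriv g x) : 0 < g b := by
  have := strictMonoOn_of_deriv_pos (convex_Icc a b) hg.continuousOn (by rwa [interior_Icc])
    ⟨le_rfl, hab.le⟩ ⟨hab.le, le_rfl⟩ hab
  rwa [ha] at this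

lemma HasDerivAt.nonpos_of_pos_left {g : ℝ → ℝ} {g' a b : ℝ} (hg : HasDerivAt g g' b)
    (hb : g b = 0) (hab : a < b) (hpos : ∀ x ∈ Ioo a b, 0 < g x) : g' ≤ 0 := by
  have hslope := (hasDerivAt_iff_tendsto_slope.mp hg).mono_left
    (nhdsWithin_mono _ fun x (hx : x ∈ Iio b) => ne_of_lt hx)
  refine le_of_tendsto hslope ?_
  filter_upwards [Ioo_mem_nhdsLT hab] with x hx
  rw [slope_def_field, hb]
  exact (div_neg_of_pos_of_neg (by linarith [hpos x hx]) (by linarith [hx.2])).le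

lemma StrictMono.range_eq_Ioo_of_tendsto {v : ℝ → ℝ} (hv : StrictMono v) (hc : Continuous v)
    {a b : ℝ} (hbot : Tendsto v atBot (𝓝 a)) (htop : Tendsto v atTop (𝓝 b)) :
    range v = Ioo a b := by
  refine Subset.antisymm ?_ fun q hq => mem_range_of_exists_le_of_exists_ge hc ?_ ?_
  · rintro _ ⟨x, rfl⟩
    exact ⟨(hv.monotone.le_of_tendsto hbot (x - 1)).trans_lt (hv (sub_one_lt x)),
      (hv (lt_add_one x)).trans_le (hv.monotone.ge_of_tendsto htop (x + 1))⟩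
  · exact (hbot.eventually (gt_mem_nhds hq.1)).exists.imp fun _ => le_of_lt
  · exact (htop.eventually (lt_mem_nhds hq.2)).exists.imp fun _ => le_of_lt

lemma StrictMono.continuousOn_invFun {v : ℝ → ℝ} (hv : StrictMono v) (ho : IsOpen (range v)) :
    ContinuousOn (invFun v) (range v) := by
  have hmono : StrictMonoOn (invFun v) (range v) := fun q hq r hr hqr =>
    hv.lt_iff_lt.1 (by rwa [invFun_eq hq, invFun_eq hr])
  have himage : invFun v '' range v = univ :=
    eq_univ_of_forall fun x => ⟨v x, mem_range_self x, leftInverse_invFun hv.injective x⟩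
  exact fun q hq => (hmono.continuousAt_of_image_mem_nhds (ho.mem_nhds hq)
    (by simp [himage])).continuousWithinAt

lemma intervalIntegral_le_integral_Ioi {N : ℝ → ℝ} (hN : ∀ x, 0 ≤ N x) {a : ℝ}
    (hNi : IntegrableOn N (Ioi a)) (b : ℝ) : ∫ x in a..b, N x ≤ ∫ x in Ioi a, N x := by
  rcases le_total a b with hab | hab
  · rw [intervalIntegral.integral_of_le hab]
    exact setIntegral_mono_set hNi (ae_of_all _ fun x => hN x) (ae_of_all _ Ioc_subset_Ioi_self)
  · linarith [setIntegral_nonneg (μ := volume) (measurableSet_Ioi (a := a)) fun x _ => hN x,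
      intervalIntegral.integral_nonneg (μ := volume) hab fun x _ => hN x,
      intervalIntegral.integral_symm (μ := volume) (f := N) a b]

lemma integral_Ioi_lt_integral_Ioi {N : ℝ → ℝ} (hN : ∀ x, 0 < N x) (hNc : Continuous N)
    (hNi : Integrable N) {a b : ℝ} (hab : a < b) : ∫ x in Ioi b, N x < ∫ x in Ioi a, N x := by
  rw [← intervalIntegral.integral_interval_add_Ioi (a := a) (b := b) hNi.integrableOn
    hNi.integrableOn]
  linarith [intervalIntegral.intervalIntegral_pos_of_pos_on
    (hNc.intervalIntegrable a b) (fun x _ => hN x) hab]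

lemma continuous_gaussianPDFReal (μ : ℝ) (v : NNReal) : Continuous (gaussianPDFReal μ v) := by
  unfold gaussianPDFReal
  fun_prop

lemma ConvexOn.add_deriv_mul_sub_le {S : Set ℝ} {f : ℝ → ℝ} (hf : ConvexOn ℝ S f) {x y : ℝ}
    (hx : x ∈ S) (hy : y ∈ S) (hd : DifferentiableAt ℝ f x) :
    f x + deriv f x * (y - x) ≤ f y := by
  rcases lt_trichotomy x y with h | rfl | h
  · have := hf.deriv_le_slope hx hy h hd
    rw [slope_def_field, le_div_iff₀ (sub_pos.2 h)] at this
    linarith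
  · simp
  · have := hf.slope_le_deriv hy hx h hd
    rw [slope_def_field, div_le_iff₀ (sub_pos.2 h)] at this
    linarith

/-- The Legendre transform of `ψ` at slope `q`, computed at the point where `ψ'` equals `q`
(junk for `q ∉ range (deriv ψ)`). -/
noncomputable def legendre (ψ : ℝ → ℝ) (q : ℝ) : ℝ :=
  q * invFun (deriv ψ) q - ψ (invFun (deriv ψ) q)

lemma legendre_deriv {ψ : ℝ → ℝ} (hinj : Injective (deriv ψ)) (x : ℝ) :
    legendre ψ (deriv ψ x) = x * deriv ψ x - ψ x := by
  rw [legendre, leftInverse_invFun hinj x, mul_comm]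

lemma mul_sub_le_legendre {ψ : ℝ → ℝ} (hconv : ConvexOn ℝ univ ψ) (hd : Differentiable ℝ ψ)
    {q : ℝ} (hq : q ∈ range (deriv ψ)) (x : ℝ) : x * q - ψ x ≤ legendre ψ q := by
  have := hconv.add_deriv_mul_sub_le (mem_univ (invFun (deriv ψ) q)) (mem_univ x) (hd _)
  rw [invFun_eq hq] at this
  rw [legendre]
  linarith

/-- Conditions (1)–(3) of the differential system (D). -/
structure IsODESolution (f H N ψ : ℝ → ℝ) (c : ℝ) : Prop where
  contDiff : ContDiff ℝ 2 ψ
  ode : ∀ s, f (deriv ψ s) * deriv (deriv ψ) s * deriv H (s * deriv ψ s - ψ s) = c * N s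
  tendsto_atBot : Tendsto (deriv ψ) atBot (𝓝 0)
  tendsto_atTop : Tendsto (deriv ψ) atTop (𝓝 1)

namespace IsODESolution

variable {f H N ψ : ℝ → ℝ} {c : ℝ}

lemma differentiable (h : IsODESolution f H N ψ c) : Differentiable ℝ ψ :=
  h.contDiff.differentiable (by norm_num)

lemma differentiable_deriv (h : IsODESolution f H N ψ c) : Differentiable ℝ (deriv ψ) :=
  h.contDiff.differentiable_deriv_two

lemma continuous_deriv_deriv (h : IsODESolution f H N ψ c) : Continuous (deriv (deriv ψ)) :=
  (h.contDiff.deriv' (n := 1)).continuous_deriv_one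

lemma const_pos (h : IsODESolution f H N ψ c) (hf : ∀ x ∈ Icc (0 : ℝ) 1, 0 < f x)
    (hH : ∀ x, 0 < deriv H x) (hN : ∀ x, 0 < N x) : 0 < c := by
  by_contra! hc
  obtain ⟨a, ha⟩ :=
    (h.tendsto_atBot.eventually (gt_mem_nhds (by norm_num : (0 : ℝ) < 1 / 3))).exists
  obtain ⟨b, hb, hab⟩ :=
    ((h.tendsto_atTop.eventually (lt_mem_nhds (by norm_num : (2 / 3 : ℝ) < 1))).and
      (eventually_ge_atTop a)).exists
  -- on the window `ψ' ∈ [1/3, 2/3]` the equation forces `ψ'' ≤ 0`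
  refine (apply_lt_of_deriv_nonpos_on_window h.differentiable_deriv hab ha.le (by norm_num)
    fun x _ hx => ?_).not_gt hb
  have hfH : 0 < f (deriv ψ x) * deriv H (x * deriv ψ x - ψ x) :=
    mul_pos (hf _ ⟨by linarith [hx.1], by linarith [hx.2]⟩) (hH _)
  nlinarith [h.ode x, hN x]

lemma pos_apply_deriv (h : IsODESolution f H N ψ c) (hf : ∀ x ∈ Icc (0 : ℝ) 1, 0 < f x)
    (hH : ∀ x, 0 < deriv H x) (hN : ∀ x, 0 < N x) (s : ℝ) : 0 < f (deriv ψ s) := by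
  have hc := h.const_pos hf hH hN
  set y := deriv ψ s
  by_contra! hfy
  -- then `ψ'` can cross the level `y` only downwards, against its limits `0` and `1`
  have hlevel : ∀ x, deriv ψ x = y → deriv (deriv ψ) x < 0 := fun x hx => by
    by_contra! hv
    have := mul_nonpos_of_nonpos_of_nonneg (mul_nonpos_of_nonpos_of_nonneg hfy hv)
      (hH (x * y - ψ x)).le
    have hode := h.ode x
    rw [hx] at hode
    linarith [mul_pos hc (hN x)]
  rcases lt_or_ge y 1 with hy | hy
  · obtain ⟨b, hb, hsb⟩ := ((h.tendsto_atTop.eventually (lt_mem_nhds hy)).and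
      (eventually_ge_atTop s)).exists
    exact (apply_le_of_deriv_neg_at_level h.differentiable_deriv hsb le_rfl
      fun x _ => hlevel x).not_gt hb
  · obtain ⟨a, ha, has⟩ :=
      ((h.tendsto_atBot.eventually (gt_mem_nhds (by linarith : (0 : ℝ) < y))).and
        (eventually_le_atBot s)).exists
    exact (le_apply_of_deriv_neg_at_level h.differentiable_deriv has le_rfl
      fun x _ => hlevel x).not_gt ha

lemma deriv_deriv_pos (h : IsODESolution f H N ψ c) (hf : ∀ x ∈ Icc (0 : ℝ) 1, 0 < f x)
    (hH : ∀ x, 0 < deriv H x) (hN : ∀ x, 0 < N x) (s : ℝ) : 0 < deriv (deriv ψ) s := by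
  have hode : 0 < f (deriv ψ s) * deriv (deriv ψ) s * deriv H (s * deriv ψ s - ψ s) :=
    h.ode s ▸ mul_pos (h.const_pos hf hH hN) (hN s)
  exact pos_of_mul_pos_right (pos_of_mul_pos_left hode (hH _).le) (h.pos_apply_deriv hf hH hN s).le

lemma strictMono_deriv (h : IsODESolution f H N ψ c) (hf : ∀ x ∈ Icc (0 : ℝ) 1, 0 < f x)
    (hH : ∀ x, 0 < deriv H x) (hN : ∀ x, 0 < N x) : StrictMono (deriv ψ) :=
  strictMono_of_deriv_pos (h.deriv_deriv_pos hf hH hN)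

lemma range_deriv (h : IsODESolution f H N ψ c) (hf : ∀ x ∈ Icc (0 : ℝ) 1, 0 < f x)
    (hH : ∀ x, 0 < deriv H x) (hN : ∀ x, 0 < N x) : range (deriv ψ) = Ioo 0 1 :=
  (h.strictMono_deriv hf hH hN).range_eq_Ioo_of_tendsto h.differentiable_deriv.continuous
    h.tendsto_atBot h.tendsto_atTop

lemma continuousOn_mul_legendre (h : IsODESolution f H N ψ c)
    (hf : ∀ x ∈ Icc (0 : ℝ) 1, 0 < f x) (hfc : ContinuousOn f (Icc 0 1)) (hH : ∀ x, 0 < deriv H x)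
    (hHc : Continuous (deriv H)) (hN : ∀ x, 0 < N x) :
    ContinuousOn (fun q => f q * deriv H (legendre ψ q)) (range (deriv ψ)) := by
  have hr := h.range_deriv hf hH hN
  have hg := (h.strictMono_deriv hf hH hN).continuousOn_invFun (hr ▸ isOpen_Ioo)
  refine (hfc.mono (hr ▸ Ioo_subset_Icc_self)).mul (hHc.comp_continuousOn ?_)
  exact (continuousOn_id.mul hg).sub (h.differentiable.continuous.comp_continuousOn hg)

lemma integral_const_mul_eq_integral_legendre (h : IsODESolution f H N ψ c)
    (hf : ∀ x ∈ Icc (0 : ℝ) 1, 0 < f x) (hfc : ContinuousOn f (Icc 0 1)) (hH : ∀ x, 0 < deriv H x)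
    (hHc : Continuous (deriv H)) (hN : ∀ x, 0 < N x) (a b : ℝ) :
    ∫ x in a..b, c * N x = ∫ q in deriv ψ a..deriv ψ b, f q * deriv H (legendre ψ q) := by
  rw [← intervalIntegral.integral_comp_mul_deriv' (fun x _ => (h.differentiable_deriv x).hasDerivAt)
    h.continuous_deriv_deriv.continuousOn
    ((h.continuousOn_mul_legendre hf hfc hH hHc hN).mono (image_subset_range _ _))]
  refine intervalIntegral.integral_congr fun x _ => ?_
  rw [comp_apply, legendre_deriv (h.strictMono_deriv hf hH hN).injective, ← h.ode x]
  ring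

end IsODESolution

section TwoSolutions

variable {f H N ψ₁ ψ₂ : ℝ → ℝ} {c₁ c₂ : ℝ}

lemma deriv_mem_range_deriv (h₁ : IsODESolution f H N ψ₁ c₁) (h₂ : IsODESolution f H N ψ₂ c₂)
    (hf : ∀ x ∈ Icc (0 : ℝ) 1, 0 < f x) (hH : ∀ x, 0 < deriv H x) (hN : ∀ x, 0 < N x) (x : ℝ) :
    deriv ψ₁ x ∈ range (deriv ψ₂) := by
  rw [h₂.range_deriv hf hH hN, ← h₁.range_deriv hf hH hN]
  exact mem_range_self x

lemma deriv_deriv_lt_of_deriv_eq (h₁ : IsODESolution f H N ψ₁ c₁)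
    (h₂ : IsODESolution f H N ψ₂ c₂) (hf : ∀ x ∈ Icc (0 : ℝ) 1, 0 < f x)
    (hH : ∀ x, 0 < deriv H x) (hHm : StrictMono (deriv H)) (hN : ∀ x, 0 < N x) (hc : c₂ ≤ c₁)
    {β : ℝ} (hderiv : deriv ψ₁ β = deriv ψ₂ β) (hlt : ψ₂ β < ψ₁ β) :
    deriv (deriv ψ₂) β < deriv (deriv ψ₁) β := by
  set q := deriv ψ₁ β
  have hE : deriv H (β * q - ψ₁ β) < deriv H (β * q - ψ₂ β) := hHm (by linarith)
  have hfq : 0 < f q := h₁.pos_apply_deriv hf hH hN β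
  have hd₂ : 0 < deriv (deriv ψ₂) β := h₂.deriv_deriv_pos hf hH hN β
  have hode₁ := h₁.ode β
  have hode₂ := h₂.ode β
  rw [← hderiv] at hode₂
  have hcN : c₂ * N β ≤ c₁ * N β := mul_le_mul_of_nonneg_right hc (hN β).le
  -- with `wᵢ = β q - ψᵢ β`: `f q ψ₂'' H'(w₁) < f q ψ₂'' H'(w₂) = c₂ N ≤ c₁ N = f q ψ₁'' H'(w₁)`
  have key : f q * deriv H (β * q - ψ₁ β) * deriv (deriv ψ₂) β <
      f q * deriv H (β * q - ψ₁ β) * deriv (deriv ψ₁) β := by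
    nlinarith [mul_lt_mul_of_pos_left hE (mul_pos hfq hd₂)]
  exact lt_of_mul_lt_mul_left key (mul_pos hfq (hH _)).le

lemma integral_le_integral_legendre (h₁ : IsODESolution f H N ψ₁ c₁)
    (h₂ : IsODESolution f H N ψ₂ c₂) (hf : ∀ x ∈ Icc (0 : ℝ) 1, 0 < f x)
    (hfc : ContinuousOn f (Icc 0 1)) (hH : ∀ x, 0 < deriv H x) (hHm : Monotone (deriv H))
    (hHc : Continuous (deriv H)) (hN : ∀ x, 0 < N x) (hNc : Continuous N) {t X : ℝ}
    (htX : t ≤ X) (hlt : ∀ x ∈ Icc t X, ψ₂ x < ψ₁ x) :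
    ∫ x in t..X, c₁ * N x ≤
      ∫ q in deriv ψ₁ t..deriv ψ₁ X, f q * deriv H (legendre ψ₂ q) := by
  have hr := deriv_mem_range_deriv h₁ h₂ hf hH hN
  have hF := h₂.continuousOn_mul_legendre hf hfc hH hHc hN
  rw [← intervalIntegral.integral_comp_mul_deriv'
    (fun x _ => (h₁.differentiable_deriv x).hasDerivAt)
    h₁.continuous_deriv_deriv.continuousOn (hF.mono (image_subset_iff.2 fun x _ => hr x))]
  have hconv : ConvexOn ℝ univ ψ₂ :=
    (h₂.strictMono_deriv hf hH hN).monotone.convexOn_univ_of_deriv h₂.differentiable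
  refine intervalIntegral.integral_mono_on htX ((continuous_const.mul hNc).intervalIntegrable _ _)
    (((hF.comp_continuous h₁.differentiable_deriv.continuous hr).mul
      h₁.continuous_deriv_deriv).intervalIntegrable _ _) fun x hx => ?_
  have hw : x * deriv ψ₁ x - ψ₁ x ≤ legendre ψ₂ (deriv ψ₁ x) :=
    (by linarith [hlt x hx] : x * deriv ψ₁ x - ψ₁ x ≤ x * deriv ψ₁ x - ψ₂ x).trans
      (mul_sub_le_legendre hconv h₂.differentiable (hr x) x)
  rw [comp_apply, ← h₁.ode x, mul_right_comm]
  exact mul_le_mul_of_nonneg_right (mul_le_mul_of_nonneg_left (hHm hw)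
    (h₁.pos_apply_deriv hf hH hN x).le) (h₁.deriv_deriv_pos hf hH hN x).le

lemma deriv_le_deriv_of_lt_on_Ici (h₁ : IsODESolution f H N ψ₁ c₁)
    (h₂ : IsODESolution f H N ψ₂ c₂) (hf : ∀ x ∈ Icc (0 : ℝ) 1, 0 < f x)
    (hfc : ContinuousOn f (Icc 0 1)) (hH : ∀ x, 0 < deriv H x) (hHm : Monotone (deriv H))
    (hHc : Continuous (deriv H)) (hN : ∀ x, 0 < N x) (hNc : Continuous N) (hNi : Integrable N)
    (hc : c₂ ≤ c₁) {t : ℝ} (hlt : ∀ x, t ≤ x → ψ₂ x < ψ₁ x) : deriv ψ₁ t ≤ deriv ψ₂ t := by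
  by_contra! ht
  have hr := deriv_mem_range_deriv h₁ h₂ hf hH hN
  set t₂ := invFun (deriv ψ₂) (deriv ψ₁ t)
  have htt₂ : t < t₂ := (h₂.strictMono_deriv hf hH hN).lt_iff_lt.1 (by rwa [invFun_eq (hr t)])
  have hbound : ∀ X, t ≤ X → c₁ * ∫ x in t..X, N x ≤ c₂ * ∫ x in Ioi t₂, N x := fun X hX => by
    calc c₁ * ∫ x in t..X, N x = ∫ x in t..X, c₁ * N x :=
          (intervalIntegral.integral_const_mul _ _).symm
      _ ≤ ∫ q in deriv ψ₁ t..deriv ψ₁ X, f q * deriv H (legendre ψ₂ q) :=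
        integral_le_integral_legendre h₁ h₂ hf hfc hH hHm hHc hN hNc hX fun x hx => hlt x hx.1
      _ = c₂ * ∫ x in t₂..invFun (deriv ψ₂) (deriv ψ₁ X), N x := by
        rw [← intervalIntegral.integral_const_mul,
          h₂.integral_const_mul_eq_integral_legendre hf hfc hH hHc hN,
          invFun_eq (hr t), invFun_eq (hr X)]
      _ ≤ c₂ * ∫ x in Ioi t₂, N x := mul_le_mul_of_nonneg_left
        (intervalIntegral_le_integral_Ioi (fun x => (hN x).le) hNi.integrableOn _)
        (h₂.const_pos hf hH hN).le
  have hlim : c₁ * ∫ x in Ioi t, N x ≤ c₂ * ∫ x in Ioi t₂, N x :=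
    le_of_tendsto
      ((intervalIntegral_tendsto_integral_Ioi t hNi.integrableOn tendsto_id).const_mul c₁)
      ((eventually_ge_atTop t).mono hbound)
  have hIoi : 0 ≤ ∫ x in Ioi t, N x := setIntegral_nonneg measurableSet_Ioi fun x _ => (hN x).le
  nlinarith [integral_Ioi_lt_integral_Ioi hN hNc hNi htt₂, h₂.const_pos hf hH hN]

theorem deriv_sub_neg_of_lt_sInf_zero (h₁ : IsODESolution f H N ψ₁ c₁)
    (h₂ : IsODESolution f H N ψ₂ c₂) (hf : ∀ x ∈ Icc (0 : ℝ) 1, 0 < f x)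
    (hfc : ContinuousOn f (Icc 0 1)) (hH : ∀ x, 0 < deriv H x) (hHm : StrictMono (deriv H))
    (hHc : Continuous (deriv H)) (hN : ∀ x, 0 < N x) (hNc : Continuous N) (hNi : Integrable N)
    (hc : c₂ ≤ c₁) {s₀ : ℝ} (hs₀ : ψ₁ s₀ = ψ₂ s₀) {b : EReal}
    (hb : b = sInf (Real.toEReal '' {s | s₀ < s ∧ deriv (ψ₁ - ψ₂) s = 0})) {s : ℝ} (hs : s₀ < s)
    (hsb : (s : EReal) < b) : deriv (ψ₁ - ψ₂) s < 0 := by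
  have hθ' : ∀ x, HasDerivAt (ψ₁ - ψ₂) (deriv ψ₁ x - deriv ψ₂ x) x := fun x =>
    (h₁.differentiable x).hasDerivAt.sub (h₂.differentiable x).hasDerivAt
  have hθ'' : ∀ x, HasDerivAt (deriv (ψ₁ - ψ₂)) (deriv (deriv ψ₁) x - deriv (deriv ψ₂) x) x :=
    fun x => by
      rw [funext fun x => (hθ' x).deriv]
      exact (h₁.differentiable_deriv x).hasDerivAt.sub (h₂.differentiable_deriv x).hasDerivAt
  have hθ'c : Continuous (deriv (ψ₁ - ψ₂)) :=
    continuous_iff_continuousAt.2 fun x => (hθ'' x).continuousAt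
  by_contra! hθs
  have hpos : ∀ x, s₀ < x → (x : EReal) < b → 0 < deriv (ψ₁ - ψ₂) x := fun x hx hxb =>
    pos_of_nonneg_of_lt_sInf_zero hθ'c hb hs hsb hθs hx hxb
  have hlt : ∀ x, s₀ < x → (x : EReal) ≤ b → ψ₂ x < ψ₁ x := fun x hx hxb => by
    have := pos_of_deriv_pos (h₁.differentiable.continuous.sub h₂.differentiable.continuous) hx
      (sub_eq_zero.2 hs₀) fun y hy => hpos y hy.1 ((EReal.coe_lt_coe_iff.2 hy.2).trans_le hxb)
    simpa using this
  induction b using EReal.rec with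
  | bot => exact not_lt_bot hsb
  | top =>
    have := deriv_le_deriv_of_lt_on_Ici h₁ h₂ hf hfc hH hHm.monotone hHc hN hNc hNi hc
      fun x hx => hlt x (hs.trans_le hx) le_top
    linarith [(hθ' s).deriv, hpos s hs hsb]
  | coe β =>
    have hsβ : s < β := EReal.coe_lt_coe_iff.1 hsb
    have hβ : deriv (ψ₁ - ψ₂) β = 0 := apply_eq_zero_of_coe_eq_sInf hθ'c hb
    have hlt'' := deriv_deriv_lt_of_deriv_eq h₁ h₂ hf hH hHm hN hc
      (by linarith [(hθ' β).deriv]) (hlt β (hs.trans hsβ) le_rfl)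
    have := (hθ'' β).nonpos_of_pos_left hβ (hs.trans hsβ)
      fun x hx => hpos x hx.1 (EReal.coe_lt_coe_iff.2 hx.2)
    linarith

end TwoSolutions

theorem stmt17_general (fμ H : ℝ → ℝ) (ε : ℝ)
    (hε : 0 < ε)
    (hfC1 : ContDiffOn ℝ 1 fμ (Set.Icc 0 1))
    (hfpos : ∀ x ∈ Set.Icc (0 : ℝ) 1, 0 < fμ x)
    (hH : ContDiff ℝ 2 H)
    (hHconv : StrictConvexOn ℝ Set.univ H)
    (hH'lb : ∀ x : ℝ, ε < deriv H x)
    (N : ℝ → ℝ) (hN : ∀ s, N s = Real.exp (-(s ^ 2) / 2) / Real.sqrt (2 * Real.pi))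
    (ψ₁ ψ₂ : ℝ → ℝ) (c₁ c₂ : ℝ)
    (hψ₁C2 : ContDiff ℝ 2 ψ₁)
    (heq₁ : ∀ s : ℝ,
      fμ (deriv ψ₁ s) * deriv (deriv ψ₁) s * deriv H (s * deriv ψ₁ s - ψ₁ s) = c₁ * N s)
    (hbot₁ : Tendsto (deriv ψ₁) atBot (nhds 0))
    (htop₁ : Tendsto (deriv ψ₁) atTop (nhds 1))
    (hψ₂C2 : ContDiff ℝ 2 ψ₂)
    (heq₂ : ∀ s : ℝ,
      fμ (deriv ψ₂ s) * deriv (deriv ψ₂) s * deriv H (s * deriv ψ₂ s - ψ₂ s) = c₂ * N s)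
    (hbot₂ : Tendsto (deriv ψ₂) atBot (nhds 0))
    (htop₂ : Tendsto (deriv ψ₂) atTop (nhds 1))
    (hc : c₂ ≤ c₁)
    (θ : ℝ → ℝ) (hθ : θ = fun s => ψ₁ s - ψ₂ s)
    (s₀ : ℝ) (hs₀ : θ s₀ = 0)
    (b : EReal) (hb : b = sInf (Real.toEReal '' {s : ℝ | s₀ < s ∧ deriv θ s = 0})) :
    ∀ s : ℝ, s₀ < s → (s : EReal) < b → deriv θ s < 0 := by
  have hHm : StrictMono (deriv H) :=
    strictMonoOn_univ.1 (hHconv.strictMonoOn_deriv fun x _ => hH.differentiable (by norm_num) x)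
  obtain rfl : N = gaussianPDFReal 0 1 := funext fun s => by
    rw [hN, gaussianPDFReal]; simp [div_eq_inv_mul]
  subst hθ
  intro s hs hsb
  exact deriv_sub_neg_of_lt_sInf_zero ⟨hψ₁C2, heq₁, hbot₁, htop₁⟩ ⟨hψ₂C2, heq₂, hbot₂, htop₂⟩
    hfpos hfC1.continuousOn (fun x => hε.trans (hH'lb x)) hHm (hH.continuous_deriv (by norm_num))
    (fun x => gaussianPDFReal_pos 0 1 x one_ne_zero) (continuous_gaussianPDFReal 0 1)
    (integrable_gaussianPDFReal 0 1) hc (sub_eq_zero.1 hs₀) hb hs hsb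

/-- If `(ψ₁,c₁)` and `(ψ₂,c₂)` solve the differential system (D)
with `c₁ ≥ c₂`, `θ := ψ₁ − ψ₂`, `θ(s₀) = 0`, and
`b := inf {s > s₀ : θ'(s) = 0}` (with `b = +∞` if this set is empty, encoded in
`EReal`), then `b > s₀` implies `θ' < 0` on `(s₀, b)`. -/
theorem stmt17 (fμ H : ℝ → ℝ) (ε K : ℝ)
    (hε : 0 < ε) (hεK : ε < K)
    (hfC1 : ContDiffOn ℝ 1 fμ (Set.Icc 0 1))
    (hfpos : ∀ x ∈ Set.Icc (0 : ℝ) 1, 0 < fμ x)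
    (hH : ContDiff ℝ 2 H)
    (hHconv : StrictConvexOn ℝ Set.univ H)
    (hH'lb : ∀ x : ℝ, ε < deriv H x) (hH'ub : ∀ x : ℝ, deriv H x < K)
    (N : ℝ → ℝ) (hN : ∀ s, N s = Real.exp (-(s ^ 2) / 2) / Real.sqrt (2 * Real.pi))
    (ψ₁ ψ₂ : ℝ → ℝ) (c₁ c₂ : ℝ)
    (hψ₁C2 : ContDiff ℝ 2 ψ₁)
    (heq₁ : ∀ s : ℝ,
      fμ (deriv ψ₁ s) * deriv (deriv ψ₁) s * deriv H (s * deriv ψ₁ s - ψ₁ s) = c₁ * N s)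
    (hbot₁ : Tendsto (deriv ψ₁) atBot (nhds 0))
    (htop₁ : Tendsto (deriv ψ₁) atTop (nhds 1))
    (hint₁ : Integrable (fun z => ψ₁ z * N z))
    (hzero₁ : (∫ z, ψ₁ z * N z) = 0)
    (hψ₂C2 : ContDiff ℝ 2 ψ₂)
    (heq₂ : ∀ s : ℝ,
      fμ (deriv ψ₂ s) * deriv (deriv ψ₂) s * deriv H (s * deriv ψ₂ s - ψ₂ s) = c₂ * N s)
    (hbot₂ : Tendsto (deriv ψ₂) atBot (nhds 0))
    (htop₂ : Tendsto (deriv ψ₂) atTop (nhds 1))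
    (hint₂ : Integrable (fun z => ψ₂ z * N z))
    (hzero₂ : (∫ z, ψ₂ z * N z) = 0)
    (hc : c₂ ≤ c₁)
    (θ : ℝ → ℝ) (hθ : θ = fun s => ψ₁ s - ψ₂ s)
    (s₀ : ℝ) (hs₀ : θ s₀ = 0)
    (b : EReal) (hb : b = sInf (Real.toEReal '' {s : ℝ | s₀ < s ∧ deriv θ s = 0}))
    (hlt : (s₀ : EReal) < b) :
    ∀ s : ℝ, s₀ < s → (s : EReal) < b → deriv θ s < 0 :=
  stmt17_general fμ H ε hε hfC1 hfpos hH hHconv hH'lb N hN ψ₁ ψ₂ c₁ c₂ hψ₁C2 heq₁ hbot₁ htop₁ hψ₂C2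
    heq₂ hbot₂ htop₂ hc θ hθ s₀ hs₀ b hb
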